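/- arXiv:2112.12864 — 3 statements merged into one kernel-verified Lean document; each statement's English description precedes it below -/
import Mathlib

section
/- Let G be a finite group and V a finite-dimensional representation of G over a field of characteristic zero. Then V is a direct sum of faithful irreducible representations if and only if V^H = 0 for every non-trivial normal subgroup H of G. -/
open Representation

section Aux

variable {k : Type*} [Field k] {V : Type*} [AddCommGroup V] [Module k V]
  {G : Type*} [Group G] (ρ : Representation k G V)

/-- The invariant `k`-submodule of `V` corresponding to a `MonoidAlgebra k G`-submodule
of `ρ.asModule`. -/
def auxT (p : Submodule (MonoidAlgebra k G) ρ.asModule) : Submodule k V where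
  carrier := {v : V | ρ.asModuleEquiv.symm v ∈ p}
  add_mem' := fun {a b} ha hb => by
    simpa only [Set.mem_setOf_eq, map_add] using add_mem ha hb
  zero_mem' := by simpa only [Set.mem_setOf_eq, map_zero] using zero_mem p
  smul_mem' := fun c v hv => by
    simpa only [Set.mem_setOf_eq, ρ.asModuleEquiv_symm_map_smul] using
      p.smul_mem (x := ρ.asModuleEquiv.symm v) (algebraMap k (MonoidAlgebra k G) c) hv

lemma mem_auxT {p : Submodule (MonoidAlgebra k G) ρ.asModule} {v : V} :
    v ∈ auxT ρ p ↔ ρ.asModuleEquiv.symm v ∈ p := Iff.rfl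

lemma mem_auxT' {p : Submodule (MonoidAlgebra k G) ρ.asModule} {x : ρ.asModule} :
    ρ.asModuleEquiv x ∈ auxT ρ p ↔ x ∈ p := by
  rw [mem_auxT, LinearEquiv.symm_apply_apply]

lemma auxT_le_iff {p q : Submodule (MonoidAlgebra k G) ρ.asModule} :
    auxT ρ p ≤ auxT ρ q ↔ p ≤ q := by
  constructor
  · intro h x hx
    exact (mem_auxT' ρ).1 (h ((mem_auxT' ρ).2 hx))
  · intro h v hv
    exact h hv

lemma auxT_mono {p q : Submodule (MonoidAlgebra k G) ρ.asModule} (h : p ≤ q) :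
    auxT ρ p ≤ auxT ρ q := (auxT_le_iff ρ).2 h

lemma auxT_bot : auxT ρ (⊥ : Submodule (MonoidAlgebra k G) ρ.asModule) = ⊥ := by
  ext v
  simp only [mem_auxT, Submodule.mem_bot]
  constructor
  · intro h
    have : ρ.asModuleEquiv (ρ.asModuleEquiv.symm v) = ρ.asModuleEquiv 0 := by rw [h]
    simpa using this
  · rintro rfl; simp

lemma auxT_top : auxT ρ (⊤ : Submodule (MonoidAlgebra k G) ρ.asModule) = ⊤ := by
  ext v; simp [mem_auxT]

lemma auxT_inf (p q : Submodule (MonoidAlgebra k G) ρ.asModule) :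
    auxT ρ (p ⊓ q) = auxT ρ p ⊓ auxT ρ q := by
  ext v; simp [mem_auxT, Submodule.mem_inf]

lemma auxT_invt (p : Submodule (MonoidAlgebra k G) ρ.asModule) (g : G) :
    ∀ v ∈ auxT ρ p, ρ g v ∈ auxT ρ p := by
  intro v hv
  rw [mem_auxT, ρ.asModuleEquiv_symm_map_rho]
  exact p.smul_mem _ hv

lemma auxT_iSup {ι : Sort*} (f : ι → Submodule (MonoidAlgebra k G) ρ.asModule) :
    auxT ρ (⨆ i, f i) = ⨆ i, auxT ρ (f i) := by
  refine le_antisymm ?_ (iSup_le fun i => auxT_mono ρ (le_iSup f i))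
  intro v hv
  rw [mem_auxT] at hv
  have key : ρ.asModuleEquiv (ρ.asModuleEquiv.symm v) ∈ ⨆ i, auxT ρ (f i) := by
    refine Submodule.iSup_induction (motive := fun x : ρ.asModule =>
      ρ.asModuleEquiv x ∈ ⨆ i, auxT ρ (f i)) f hv (fun i x hx => ?_) ?_ (fun x y hx hy => ?_)
    · exact le_iSup (fun i => auxT ρ (f i)) i ((mem_auxT' ρ).2 hx)
    · show ρ.asModuleEquiv 0 ∈ ⨆ i, auxT ρ (f i)
      rw [map_zero]; exact zero_mem _
    · show ρ.asModuleEquiv (x + y) ∈ ⨆ i, auxT ρ (f i)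
      rw [map_add]; exact add_mem hx hy
  rwa [LinearEquiv.apply_symm_apply] at key

lemma auxAlg (U : Submodule k V) (hU : ∀ g : G, ∀ v ∈ U, ρ g v ∈ U) :
    ∀ a : MonoidAlgebra k G, ∀ v ∈ U, ρ.asAlgebraHom a v ∈ U := by
  intro a
  induction a using MonoidAlgebra.induction_on with
  | of g => intro v hv; rw [asAlgebraHom_of]; exact hU g v hv
  | add f g hf hg =>
      intro v hv
      rw [map_add, LinearMap.add_apply]
      exact add_mem (hf v hv) (hg v hv)
  | smul r f hf =>
      intro v hv
      rw [map_smul, LinearMap.smul_apply]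
      exact U.smul_mem r (hf v hv)

/-- The `MonoidAlgebra k G`-submodule of `ρ.asModule` corresponding to an invariant
`k`-submodule of `V`. -/
def auxS (U : Submodule k V) (hU : ∀ g : G, ∀ v ∈ U, ρ g v ∈ U) :
    Submodule (MonoidAlgebra k G) ρ.asModule where
  carrier := {x : ρ.asModule | ρ.asModuleEquiv x ∈ U}
  add_mem' := fun {a b} ha hb => by
    simpa only [Set.mem_setOf_eq, map_add] using add_mem ha hb
  zero_mem' := by simpa only [Set.mem_setOf_eq, map_zero] using zero_mem U
  smul_mem' := fun a {x} hx => by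
    rw [Set.mem_setOf_eq, ρ.asModuleEquiv_map_smul]
    exact auxAlg ρ U hU a _ hx

lemma mem_auxS {U : Submodule k V} {hU : ∀ g : G, ∀ v ∈ U, ρ g v ∈ U} {x : ρ.asModule} :
    x ∈ auxS ρ U hU ↔ ρ.asModuleEquiv x ∈ U := Iff.rfl

lemma auxT_auxS (U : Submodule k V) (hU : ∀ g : G, ∀ v ∈ U, ρ g v ∈ U) :
    auxT ρ (auxS ρ U hU) = U := by
  ext v
  change ρ.asModuleEquiv (ρ.asModuleEquiv.symm v) ∈ U ↔ v ∈ U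
  rw [LinearEquiv.apply_symm_apply]

lemma auxCompl [Finite G] [CharZero k] (p : Submodule (MonoidAlgebra k G) ρ.asModule) :
    ∃ q, IsCompl p q := by
  classical
  haveI := Fintype.ofFinite G
  set U := auxT ρ p with hUdef
  have hUinv : ∀ g : G, ∀ v ∈ U, ρ g v ∈ U := fun g => auxT_invt ρ p g
  obtain ⟨C, hC⟩ := Submodule.exists_isCompl U
  set π₀ : V →ₗ[k] V := U.subtype ∘ₗ (U.projectionOnto C hC) with hπ₀
  have hπ₀mem : ∀ v : V, π₀ v ∈ U := fun v => (U.projectionOnto C hC v).2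
  have hπ₀id : ∀ v ∈ U, π₀ v = v := by
    intro v hv
    show (U.subtype) (U.projectionOnto C hC v) = v
    rw [show v = ((⟨v, hv⟩ : U) : V) from rfl, Submodule.projectionOnto_apply_left hC]
    rfl
  have hcard : (Fintype.card G : k) ≠ 0 := Nat.cast_ne_zero.mpr Fintype.card_ne_zero
  set π : V →ₗ[k] V :=
    (Fintype.card G : k)⁻¹ • ∑ g : G, ((ρ g⁻¹) ∘ₗ π₀ ∘ₗ (ρ g)) with hπ
  have hπapply : ∀ v : V,
      π v = (Fintype.card G : k)⁻¹ • ∑ g : G, ρ g⁻¹ (π₀ (ρ g v)) := by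
    intro v
    simp [hπ, LinearMap.sum_apply]
  have hπmem : ∀ v : V, π v ∈ U := by
    intro v
    rw [hπapply]
    exact U.smul_mem _ (Submodule.sum_mem _ fun g _ => hUinv g⁻¹ _ (hπ₀mem _))
  have hπid : ∀ v ∈ U, π v = v := by
    intro v hv
    rw [hπapply]
    have : ∀ g : G, ρ g⁻¹ (π₀ (ρ g v)) = v := by
      intro g
      rw [hπ₀id _ (hUinv g v hv), ← Module.End.mul_apply, ← map_mul, inv_mul_cancel, map_one,
        Module.End.one_apply]
    rw [Finset.sum_congr rfl fun g _ => this g, Finset.sum_const, Finset.card_univ,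
      ← Nat.cast_smul_eq_nsmul k, smul_smul, inv_mul_cancel₀ hcard, one_smul]
  have hπequiv : ∀ (g₀ : G) (v : V), π (ρ g₀ v) = ρ g₀ (π v) := by
    intro g₀ v
    rw [hπapply, hπapply, map_smul, map_sum]
    congr 1
    refine Fintype.sum_equiv (Equiv.mulRight g₀)
      (fun g => ρ g⁻¹ (π₀ (ρ g (ρ g₀ v)))) (fun g => ρ g₀ (ρ g⁻¹ (π₀ (ρ g v)))) (fun x => ?_)
    show ρ x⁻¹ (π₀ (ρ x (ρ g₀ v))) = ρ g₀ (ρ (x * g₀)⁻¹ (π₀ (ρ (x * g₀) v)))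
    rw [← Module.End.mul_apply (ρ x) (ρ g₀), ← map_mul,
      ← Module.End.mul_apply (ρ g₀) (ρ (x * g₀)⁻¹), ← map_mul, mul_inv_rev, mul_inv_cancel_left]
  have hkerinv : ∀ g : G, ∀ v ∈ LinearMap.ker π, ρ g v ∈ LinearMap.ker π := by
    intro g v hv
    rw [LinearMap.mem_ker] at hv ⊢
    rw [hπequiv, hv, map_zero]
  refine ⟨auxS ρ (LinearMap.ker π) hkerinv, ⟨disjoint_iff.mpr ?_, codisjoint_iff.mpr ?_⟩⟩
  · ext x
    simp only [Submodule.mem_inf, Submodule.mem_bot]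
    constructor
    · rintro ⟨hx1, hx2⟩
      have h1 : ρ.asModuleEquiv x ∈ U := (mem_auxT' ρ).2 hx1
      have h2 : π (ρ.asModuleEquiv x) = 0 := (mem_auxS ρ).1 hx2
      have h3 : ρ.asModuleEquiv x = 0 := by rw [← hπid _ h1, h2]
      have := congrArg ρ.asModuleEquiv.symm h3
      simpa using this
    · rintro rfl
      exact ⟨zero_mem _, zero_mem _⟩
  · rw [eq_top_iff]
    intro x _
    set v := ρ.asModuleEquiv x with hv
    have hy : ρ.asModuleEquiv.symm (π v) ∈ p := by
      have : π v ∈ U := hπmem v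
      exact this
    have hz : ρ.asModuleEquiv.symm (v - π v) ∈ auxS ρ (LinearMap.ker π) hkerinv := by
      rw [mem_auxS, LinearEquiv.apply_symm_apply, LinearMap.mem_ker, map_sub,
        hπid _ (hπmem v), sub_self]
    refine Submodule.mem_sup.mpr ⟨ρ.asModuleEquiv.symm (π v), hy,
      ρ.asModuleEquiv.symm (v - π v), hz, ?_⟩
    have : ρ.asModuleEquiv.symm (π v) + ρ.asModuleEquiv.symm (v - π v)
        = ρ.asModuleEquiv.symm v := by
      rw [← map_add]; congr 1; abel
    rw [this, hv, LinearEquiv.symm_apply_apply]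

/-- The subspace of `H`-fixed vectors. -/
def auxFix (H : Subgroup G) : Submodule k V where
  carrier := {v : V | ∀ h ∈ H, ρ h v = v}
  add_mem' := fun {a b} ha hb h hh => by rw [map_add, ha h hh, hb h hh]
  zero_mem' := fun h _ => by rw [map_zero]
  smul_mem' := fun c v hv h hh => by rw [map_smul, hv h hh]

lemma mem_auxFix {H : Subgroup G} {v : V} : v ∈ auxFix ρ H ↔ ∀ h ∈ H, ρ h v = v := Iff.rfl

/-- The kernel of the action on a subspace `W`, as a subgroup. -/
def auxKer (W : Submodule k V) : Subgroup G where
  carrier := {g : G | ∀ x ∈ W, ρ g x = x}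
  one_mem' := fun x _ => by rw [map_one, Module.End.one_apply]
  mul_mem' := fun {a b} ha hb x hx => by
    rw [map_mul, Module.End.mul_apply, hb x hx, ha x hx]
  inv_mem' := fun {a} ha x hx => by
    conv_lhs => rw [← ha x hx]
    rw [← Module.End.mul_apply, ← map_mul, inv_mul_cancel, map_one, Module.End.one_apply]

lemma auxKer_normal (W : Submodule k V) (hW : ∀ g : G, ∀ x ∈ W, ρ g x ∈ W) :
    (auxKer ρ W).Normal := by
  refine ⟨fun n hn g x hx => ?_⟩
  have h1 : ρ g⁻¹ x ∈ W := hW g⁻¹ x hx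
  calc ρ (g * n * g⁻¹) x = ρ g (ρ n (ρ g⁻¹ x)) := by
        rw [map_mul, map_mul, Module.End.mul_apply, Module.End.mul_apply]
    _ = ρ g (ρ g⁻¹ x) := by rw [hn _ h1]
    _ = x := by rw [← Module.End.mul_apply, ← map_mul, mul_inv_cancel, map_one,
        Module.End.one_apply]

end Aux

/-- Let `G` be a finite group and `V` a finite-dimensional representation of `G` over a
field of characteristic zero. Then `V` is a direct sum of faithful irreducible
subrepresentations if and only if `V^H = 0` for every non-trivial normal subgroup `H` of
`G`. -/
theorem stmt_2 {k : Type*} [Field k] [CharZero k]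
    {V : Type*} [AddCommGroup V] [Module k V] [FiniteDimensional k V]
    {G : Type*} [Group G] [Finite G] (ρ : Representation k G V) :
    (∃ (ι : Type) (_ : Fintype ι) (_ : DecidableEq ι) (W : ι → Submodule k V),
      (∀ i, ∀ g : G, ∀ x ∈ W i, ρ g x ∈ W i) ∧
      (∀ i, W i ≠ ⊥ ∧
        ∀ U : Submodule k V, U ≤ W i → (∀ g : G, ∀ x ∈ U, ρ g x ∈ U) →
          U = ⊥ ∨ U = W i) ∧
      (∀ i, ∀ g : G, g ≠ 1 → ∃ x ∈ W i, ρ g x ≠ x) ∧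
      DirectSum.IsInternal W) ↔
    (∀ H : Subgroup G, H.Normal → H ≠ ⊥ →
      ∀ v : V, (∀ h ∈ H, ρ h v = v) → v = 0) := by
  classical
  constructor
  · rintro ⟨ι, _, _, W, hinv, hirr, hfaith, hint⟩ H hN hH v hv
    haveI := Fintype.ofFinite G
    haveI : Fintype H := Fintype.ofFinite H
    obtain ⟨⟨h₀, h₀H⟩, h₀ne⟩ := Subgroup.ne_bot_iff_exists_ne_one.mp hH
    have h₀ne' : h₀ ≠ 1 := by simpa [Subgroup.ext_iff] using h₀ne
    have hcard : (Fintype.card H : k) ≠ 0 := Nat.cast_ne_zero.mpr Fintype.card_ne_zero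
    set π : V →ₗ[k] V := (Fintype.card H : k)⁻¹ • ∑ h : H, ρ (h : G) with hπ
    have hπapply : ∀ w : V, π w = (Fintype.card H : k)⁻¹ • ∑ h : H, ρ (h : G) w := by
      intro w; simp [hπ, LinearMap.sum_apply]
    -- π maps each W i into itself
    have hπW : ∀ i, ∀ w ∈ W i, π w ∈ W i := by
      intro i w hw
      rw [hπapply]
      exact (W i).smul_mem _ (Submodule.sum_mem _ fun h _ => hinv i h w hw)
    -- π lands in the fixed space of H
    have hπfix : ∀ (w : V) (h : G), h ∈ H → ρ h (π w) = π w := by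
      intro w h hh
      rw [hπapply w, map_smul, map_sum]
      congr 1
      refine Fintype.sum_equiv (Equiv.mulLeft (⟨h, hh⟩ : H))
        (fun h' => ρ h (ρ (h' : G) w)) (fun h' => ρ (h' : G) w) (fun x => ?_)
      show ρ h (ρ (x : G) w) = ρ ((h * x : G)) w
      rw [map_mul, Module.End.mul_apply]
    -- π fixes H-fixed vectors
    have hπid : ∀ w : V, (∀ h ∈ H, ρ h w = w) → π w = w := by
      intro w hw
      rw [hπapply]
      have : ∀ h : H, ρ (h : G) w = w := fun h => hw h h.2
      rw [Finset.sum_congr rfl fun h _ => this h, Finset.sum_const, Finset.card_univ,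
        ← Nat.cast_smul_eq_nsmul k, smul_smul, inv_mul_cancel₀ hcard, one_smul]
    -- each W i ⊓ Fix = ⊥
    have hWF : ∀ i, W i ⊓ auxFix ρ H = ⊥ := by
      intro i
      have hsub : W i ⊓ auxFix ρ H ≤ W i := inf_le_left
      have hinvU : ∀ g : G, ∀ x ∈ W i ⊓ auxFix ρ H, ρ g x ∈ W i ⊓ auxFix ρ H := by
        rintro g x ⟨hx1, hx2⟩
        refine ⟨hinv i g x hx1, fun h hh => ?_⟩
        have hmem : g⁻¹ * h * g ∈ H := by
          have := hN.conj_mem h hh g⁻¹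
          simpa using this
        calc ρ h (ρ g x) = ρ g (ρ (g⁻¹ * h * g) x) := by
              rw [← Module.End.mul_apply, ← map_mul, ← Module.End.mul_apply, ← map_mul]
              congr 2
              group
          _ = ρ g x := by rw [hx2 _ hmem]
      rcases (hirr i).2 _ hsub hinvU with h | h
      · exact h
      · exfalso
        obtain ⟨x, hxW, hxne⟩ := hfaith i h₀ h₀ne' 
        have : x ∈ W i ⊓ auxFix ρ H := by rw [h]; exact hxW
        exact hxne (this.2 h₀ h₀H)
    -- decompose v
    have hvtop : v ∈ ⨆ i, W i := by
      rw [(DirectSum.isInternal_submodule_iff_iSupIndep_and_iSup_eq_top W).mp hint |>.2]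
      trivial
    have hπv : π v = 0 := by
      refine Submodule.iSup_induction (motive := fun x : V => π x = 0) W hvtop
        (fun i x hx => ?_) (map_zero π) (fun x y hx hy => by
          show π (x + y) = 0
          rw [map_add, (hx : π x = 0), (hy : π y = 0), add_zero])
      have : π x ∈ W i ⊓ auxFix ρ H := ⟨hπW i x hx, fun h hh => hπfix x h hh⟩
      rw [hWF i] at this
      simpa using this
    rw [← hπid v hv, hπv]
  · intro hyp
    haveI := Fintype.ofFinite G
    haveI : IsSemisimpleModule (MonoidAlgebra k G) ρ.asModule := { exists_isCompl := auxCompl ρ }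
    have hwfk : WellFoundedGT (Submodule k V) := isNoetherian_iff'.mp inferInstance
    have hwf : WellFoundedGT (Submodule (MonoidAlgebra k G) ρ.asModule) := by
      refine StrictMono.wellFoundedGT (f := auxT ρ) (fun a b hab => ?_)
      rcases lt_iff_le_not_ge.mp hab with ⟨h1, h2⟩
      exact lt_iff_le_not_ge.mpr ⟨auxT_mono ρ h1, fun hba => h2 ((auxT_le_iff ρ).mp hba)⟩
    obtain ⟨s, hs1, hs2, hs3⟩ :=
      IsSemisimpleModule.exists_sSupIndep_sSup_simples_eq_top (MonoidAlgebra k G) ρ.asModule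
    have hsfin : s.Finite := WellFoundedGT.finite_of_sSupIndep hs1
    haveI : Fintype s := hsfin.fintype
    set e := (Fintype.equivFin s).symm with he
    refine ⟨Fin (Fintype.card s), inferInstance, inferInstance,
      fun i => auxT ρ ((e i : Submodule (MonoidAlgebra k G) ρ.asModule)), ?_, ?_, ?_, ?_⟩
    · intro i g x hx
      exact auxT_invt ρ _ g x hx
    · intro i
      have hatom : IsAtom (e i : Submodule (MonoidAlgebra k G) ρ.asModule) :=
        isSimpleModule_iff_isAtom.mp (hs3 _ (e i).2)
      constructor
      · intro hbot
        apply hatom.1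
        have : auxT ρ (e i : Submodule (MonoidAlgebra k G) ρ.asModule) ≤ auxT ρ ⊥ := by
          rw [auxT_bot, ← hbot]
        exact le_bot_iff.mp ((auxT_le_iff ρ).mp this)
      · intro U hU hUinv
        have hle : auxS ρ U hUinv ≤ (e i : Submodule (MonoidAlgebra k G) ρ.asModule) := by
          rw [← auxT_le_iff ρ, auxT_auxS]
          exact hU
        rcases hle.lt_or_eq with h | h
        · left
          have := hatom.2 _ h
          rw [← auxT_auxS ρ U hUinv, this, auxT_bot]
        · right
          rw [← auxT_auxS ρ U hUinv, h]
    · intro i g hg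
      by_contra hcon
      push_neg at hcon
      set Wi := auxT ρ (e i : Submodule (MonoidAlgebra k G) ρ.asModule) with hWi
      have hKer : g ∈ auxKer ρ Wi := fun x hx => hcon x hx
      have hKerbot : auxKer ρ Wi = ⊥ := by
        by_contra hne
        have hnorm : (auxKer ρ Wi).Normal :=
          auxKer_normal ρ Wi (fun g' x hx => auxT_invt ρ _ g' x hx)
        have hzero : ∀ x ∈ Wi, x = 0 := by
          intro x hx
          exact hyp _ hnorm hne x (fun h hh => hh x hx)
        have hbot : Wi = ⊥ := by
          rw [eq_bot_iff]; intro x hx; simpa using hzero x hx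
        have hatom : IsAtom (e i : Submodule (MonoidAlgebra k G) ρ.asModule) :=
          isSimpleModule_iff_isAtom.mp (hs3 _ (e i).2)
        apply hatom.1
        have : auxT ρ (e i : Submodule (MonoidAlgebra k G) ρ.asModule) ≤ auxT ρ ⊥ := by
          rw [auxT_bot, ← hbot]
        exact le_bot_iff.mp ((auxT_le_iff ρ).mp this)
      rw [hKerbot, Subgroup.mem_bot] at hKer
      exact hg hKer
    · rw [DirectSum.isInternal_submodule_iff_iSupIndep_and_iSup_eq_top]
      constructor
      · intro i
        have hdisj : Disjoint (e i : Submodule (MonoidAlgebra k G) ρ.asModule)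
            (sSup (s \ {(e i : Submodule (MonoidAlgebra k G) ρ.asModule)})) := hs1 (e i).2
        have hle : (⨆ j, ⨆ (_ : j ≠ i), auxT ρ (e j : Submodule (MonoidAlgebra k G) ρ.asModule))
            ≤ auxT ρ (sSup (s \ {(e i : Submodule (MonoidAlgebra k G) ρ.asModule)})) := by
          refine iSup₂_le fun j hj => auxT_mono ρ (le_sSup ?_)
          refine ⟨(e j).2, fun heq => hj (e.injective (Subtype.ext heq))⟩
        refine Disjoint.mono_right hle (disjoint_iff.mpr ?_)
        rw [← auxT_inf, disjoint_iff.mp hdisj, auxT_bot]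
      · have h1 : (⨆ (q : s), auxT ρ (q : Submodule (MonoidAlgebra k G) ρ.asModule)) = ⊤ := by
          rw [← auxT_iSup, ← sSup_eq_iSup', hs2, auxT_top]
        rw [← h1]
        apply le_antisymm
        · exact iSup_le fun i => le_iSup
            (fun q : s => auxT ρ (q : Submodule (MonoidAlgebra k G) ρ.asModule)) (e i)
        · refine iSup_le fun q => ?_
          have h2 : auxT ρ (q : Submodule (MonoidAlgebra k G) ρ.asModule)
              = auxT ρ ((e (e.symm q)) : Submodule (MonoidAlgebra k G) ρ.asModule) := by
            rw [e.apply_symm_apply]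
          rw [h2]
          exact le_iSup (fun i => auxT ρ ((e i : Submodule (MonoidAlgebra k G) ρ.asModule)))
            (e.symm q)
end

section
/- Let K/F be a finite Galois extension with group G, E an elliptic curve over F, and V = E(K) ⊗ ℚ viewed as a ℚ[G]-module. Then the kernel of the projection V → V^new (where V^new is the sum of the isotypic components of faithful irreducible ℚ-representations of G) equals the ℚ-span of the subgroups E(L) for F ⊆ L ⊊ K with L/F Galois; consequently E(K/F)^{G-new} ⊗ ℚ ≅ V^new. -/
/-!
By Maschke's theorem every invariant subspace has an invariant complement, so `V` is the sum of
its irreducible invariant subspaces `S`. Such an `S` is either faithful, hence in `V^new`, or is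
fixed pointwise by the kernel of the action on it, a nontrivial normal subgroup `H`, hence lies in
`V^H`; so the old part and `V^new` span `V`. Projecting along an invariant complement, an
irreducible `S` in both parts would be a quotient of some `V^H` with `H ≠ 1`, so not faithful,
and isomorphic to a faithful irreducible, which is absurd.
-/

namespace Representation

section CommRing

variable {k G V : Type*} [CommRing k] [Group G] [AddCommGroup V] [Module k V]
  (ρ : Representation k G V)

lemma mem_invtSubmodule_iff_forall_mem {p : Submodule k V} :
    p ∈ ρ.invtSubmodule ↔ ∀ g, ∀ x ∈ p, ρ g x ∈ p := by
  simp only [mem_invtSubmodule, Module.End.mem_invtSubmodule_iff_forall_mem_of_mem]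

lemma sSup_mem_invtSubmodule {T : Set (Submodule k V)} (hT : T ⊆ ρ.invtSubmodule) :
    sSup T ∈ ρ.invtSubmodule := by
  refine ρ.mem_invtSubmodule.2 fun g => (Module.End.mem_invtSubmodule _).2 <|
    sSup_le fun p hp => ?_
  exact ((Module.End.mem_invtSubmodule _).1 (ρ.mem_invtSubmodule.1 (hT hp) g)).trans
    (Submodule.comap_mono (le_sSup hp))

def fixingSubgroup (p : Submodule k V) : Subgroup G where
  carrier := {g | ∀ v ∈ p, ρ g v = v}
  one_mem' := by simp
  mul_mem' {a b} ha hb v hv := by simp [hb v hv, ha v hv]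
  inv_mem' {a} ha v hv := by
    simpa using (congrArg (ρ a⁻¹) (ha v hv)).symm

variable {ρ} in
lemma mem_fixingSubgroup {p : Submodule k V} {g : G} :
    g ∈ ρ.fixingSubgroup p ↔ ∀ v ∈ p, ρ g v = v := Iff.rfl

lemma fixingSubgroup_eq_bot_iff (p : Submodule k V) :
    ρ.fixingSubgroup p = ⊥ ↔ ∀ g : G, g ≠ 1 → ∃ v ∈ p, ρ g v ≠ v := by
  simp only [Subgroup.eq_bot_iff_forall, mem_fixingSubgroup]
  refine forall_congr' fun g => ?_
  rw [← not_imp_not]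
  push Not
  rfl

lemma fixingSubgroup_normal {p : Submodule k V} (hp : p ∈ ρ.invtSubmodule) :
    (ρ.fixingSubgroup p).Normal where
  conj_mem g hg x v hv := by
    have := hg _ ((ρ.mem_invtSubmodule_iff_forall_mem.1 hp) x⁻¹ v hv)
    simp [this]

lemma mem_invariants_comp_subtype {H : Subgroup G} {v : V} :
    v ∈ invariants (ρ.comp H.subtype) ↔ ∀ h ∈ H, ρ h v = v := by
  simp [mem_invariants]

lemma coe_invariants_comp_subtype (H : Subgroup G) :
    (invariants (ρ.comp H.subtype) : Set V) = {v | ∀ h ∈ H, ρ h v = v} :=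
  Set.ext fun _ => ρ.mem_invariants_comp_subtype

lemma invariants_comp_subtype_mem_invtSubmodule (H : Subgroup G) [H.Normal] :
    invariants (ρ.comp H.subtype) ∈ ρ.invtSubmodule :=
  ρ.mem_invtSubmodule.2 fun g => (Module.End.mem_invtSubmodule _).2 (le_comap_invariants ρ H g)

lemma le_invariants_comp_subtype_iff {p : Submodule k V} {H : Subgroup G} :
    p ≤ invariants (ρ.comp H.subtype) ↔ H ≤ ρ.fixingSubgroup p := by
  simp only [SetLike.le_def, mem_invariants_comp_subtype, mem_fixingSubgroup]
  exact forall₂_comm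

variable {ρ} in
/-- `A` embeds `G`-equivariantly into `(B ⊔ C) / C`, a quotient of `B`. -/
lemma fixingSubgroup_le_of_le_sup_of_disjoint {A B C : Submodule k V}
    (hA : A ∈ ρ.invtSubmodule) (hC : C ∈ ρ.invtSubmodule) (hABC : A ≤ B ⊔ C)
    (hAC : Disjoint A C) : ρ.fixingSubgroup B ≤ ρ.fixingSubgroup A := by
  intro g hg a ha
  obtain ⟨b, hb, c, hc, rfl⟩ := Submodule.mem_sup.1 (hABC ha)
  have hA' : ρ g (b + c) - (b + c) ∈ A :=
    A.sub_mem ((ρ.mem_invtSubmodule_iff_forall_mem.1 hA) g _ ha) ha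
  have hC' : ρ g c - c ∈ C := C.sub_mem ((ρ.mem_invtSubmodule_iff_forall_mem.1 hC) g _ hc) hc
  have hc_fixed : ρ g c - c = 0 := by
    refine Submodule.disjoint_def.1 hAC _ ?_ hC'
    convert hA' using 1
    rw [map_add, hg b hb]
    abel
  rw [map_add, hg b hb, sub_eq_zero.1 hc_fixed]

structure IsIrreducibleSubspace (p : Submodule k V) : Prop where
  mem_invtSubmodule : p ∈ ρ.invtSubmodule
  ne_bot : p ≠ ⊥
  eq_bot_or_eq : ∀ q ≤ p, q ∈ ρ.invtSubmodule → q = ⊥ ∨ q = p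

lemma isIrreducibleSubspace_iff {p : Submodule k V} :
    ρ.IsIrreducibleSubspace p ↔ p ∈ ρ.invtSubmodule ∧ p ≠ ⊥ ∧
      ∀ q ≤ p, q ∈ ρ.invtSubmodule → q = ⊥ ∨ q = p :=
  ⟨fun ⟨h₁, h₂, h₃⟩ => ⟨h₁, h₂, h₃⟩, fun ⟨h₁, h₂, h₃⟩ => ⟨h₁, h₂, h₃⟩⟩

/-- The span of the `E(L) ⊗ ℚ` for the proper subextensions `L = K^H` Galois over `F`. -/
def oldPart : Submodule k V :=
  sSup ((fun H : Subgroup G => invariants (ρ.comp H.subtype)) '' {H | H.Normal ∧ H ≠ ⊥})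

/-- `V^new`: the sum of the isotypic components of the faithful irreducible representations. -/
def newPart : Submodule k V :=
  sSup {W | ρ.IsIrreducibleSubspace W ∧ ρ.fixingSubgroup W = ⊥}

lemma oldPart_mem_invtSubmodule : ρ.oldPart ∈ ρ.invtSubmodule := by
  refine ρ.sSup_mem_invtSubmodule ?_
  rintro _ ⟨H, ⟨hH, -⟩, rfl⟩
  exact ρ.invariants_comp_subtype_mem_invtSubmodule H

lemma invariants_comp_subtype_le_oldPart (H : Subgroup G) [H.Normal] (hH : H ≠ ⊥) :
    invariants (ρ.comp H.subtype) ≤ ρ.oldPart :=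
  le_sSup ⟨H, ⟨‹_›, hH⟩, rfl⟩

lemma newPart_mem_invtSubmodule : ρ.newPart ∈ ρ.invtSubmodule :=
  ρ.sSup_mem_invtSubmodule fun _ hW => hW.1.mem_invtSubmodule

variable {ρ}

lemma IsIrreducibleSubspace.disjoint_of_not_le {p q : Submodule k V}
    (hp : ρ.IsIrreducibleSubspace p) (hq : q ∈ ρ.invtSubmodule) (hpq : ¬p ≤ q) :
    Disjoint p q :=
  disjoint_iff.2 <| (hp.eq_bot_or_eq _ inf_le_left
    (Sublattice.inf_mem hp.mem_invtSubmodule hq)).resolve_right fun h => hpq (h ▸ inf_le_right)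

lemma IsIrreducibleSubspace.le_sup_of_not_le {S C X : Submodule k V}
    (hS : ρ.IsIrreducibleSubspace S) (hSC : IsCompl S C) (hXC : X ⊔ C ∈ ρ.invtSubmodule)
    (hX : ¬X ≤ C) : S ≤ X ⊔ C := by
  refine ((hS.eq_bot_or_eq _ inf_le_left
    (Sublattice.inf_mem hS.mem_invtSubmodule hXC)).resolve_left fun h => hX ?_).ge.trans
    inf_le_right
  calc X ≤ X ⊔ C := le_sup_left
    _ = (C ⊔ S) ⊓ (X ⊔ C) := by rw [hSC.symm.sup_eq_top, top_inf_eq]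
    _ = C ⊔ S ⊓ (X ⊔ C) := sup_inf_assoc_of_le S le_sup_right
    _ = C := by rw [h, sup_bot_eq]

end CommRing

section Field

variable {k G V : Type*} [Field k] [Group G] [AddCommGroup V] [Module k V]
  {ρ : Representation k G V} [Finite G] [NeZero (Nat.card G : k)]

lemma exists_isCompl_of_mem_invtSubmodule {p : Submodule k V} (hp : p ∈ ρ.invtSubmodule) :
    ∃ q ∈ ρ.invtSubmodule, IsCompl p q := by
  have := ρ.mapSubmodule.complementedLattice_iff.2 inferInstance
  obtain ⟨q, hpq⟩ := exists_isCompl (⟨p, hp⟩ : ρ.invtSubmodule)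
  exact ⟨q, q.2, disjoint_iff.2 (congrArg Subtype.val (disjoint_iff.1 hpq.disjoint)),
    codisjoint_iff.2 (congrArg Subtype.val (codisjoint_iff.1 hpq.codisjoint))⟩

lemma exists_isIrreducibleSubspace_le {p : Submodule k V} (hp : p ∈ ρ.invtSubmodule)
    (hne : p ≠ ⊥) : ∃ S ≤ p, ρ.IsIrreducibleSubspace S := by
  have := ρ.mapSubmodule.isAtomic_iff.2 inferInstance
  obtain ⟨S, hS, hSp⟩ := (eq_bot_or_exists_atom_le (⟨p, hp⟩ : ρ.invtSubmodule)).resolve_left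
    fun h => hne (congrArg Subtype.val h)
  refine ⟨S, hSp, S.2, fun h => hS.1 (Subtype.ext h), fun q hqS hq => ?_⟩
  exact (hS.le_iff.1 (show (⟨q, hq⟩ : ρ.invtSubmodule) ≤ S from hqS)).imp
    (congrArg Subtype.val) (congrArg Subtype.val)

lemma eq_top_of_forall_isIrreducibleSubspace_le {M : Submodule k V} (hM : M ∈ ρ.invtSubmodule)
    (h : ∀ S, ρ.IsIrreducibleSubspace S → S ≤ M) : M = ⊤ := by
  obtain ⟨C, hC, hMC⟩ := exists_isCompl_of_mem_invtSubmodule hM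
  obtain rfl : C = ⊥ := by
    by_contra hne
    obtain ⟨S, hSC, hS⟩ := exists_isIrreducibleSubspace_le hC hne
    exact hS.ne_bot (disjoint_self.1 (hMC.disjoint.mono (h S hS) hSC))
  exact codisjoint_bot.1 hMC.codisjoint

/-- Projecting along an invariant complement, `S` is a quotient of some `X ∈ T`, and is isomorphic
to `X` when `X` is irreducible. -/
lemma IsIrreducibleSubspace.exists_fixingSubgroup_le_of_le_sSup {S : Submodule k V}
    (hS : ρ.IsIrreducibleSubspace S) {T : Set (Submodule k V)} (hST : S ≤ sSup T)
    (hT : T ⊆ ρ.invtSubmodule) :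
    ∃ X ∈ T, ρ.fixingSubgroup X ≤ ρ.fixingSubgroup S ∧
      (ρ.IsIrreducibleSubspace X → ρ.fixingSubgroup S ≤ ρ.fixingSubgroup X) := by
  obtain ⟨C, hC, hSC⟩ := exists_isCompl_of_mem_invtSubmodule hS.mem_invtSubmodule
  obtain ⟨X, hXT, hXC⟩ : ∃ X ∈ T, ¬X ≤ C := by
    by_contra! h
    exact hS.ne_bot (disjoint_self.1 (hSC.disjoint.mono_right (hST.trans (sSup_le h))))
  refine ⟨X, hXT, ?_, fun hX => ?_⟩
  · exact fixingSubgroup_le_of_le_sup_of_disjoint hS.mem_invtSubmodule hC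
      (hS.le_sup_of_not_le hSC (Sublattice.sup_mem (hT hXT) hC) hXC) hSC.disjoint
  · exact fixingSubgroup_le_of_le_sup_of_disjoint hX.mem_invtSubmodule hC
      (hSC.sup_eq_top ▸ le_top) (hX.disjoint_of_not_le hC hXC)

lemma IsIrreducibleSubspace.fixingSubgroup_ne_bot_of_le_oldPart {S : Submodule k V}
    (hS : ρ.IsIrreducibleSubspace S) (hSold : S ≤ ρ.oldPart) : ρ.fixingSubgroup S ≠ ⊥ := by
  obtain ⟨_, ⟨H, ⟨-, hH_ne⟩, rfl⟩, hHS, -⟩ := hS.exists_fixingSubgroup_le_of_le_sSup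
    hSold fun _ ⟨H, ⟨_, _⟩, hX⟩ => hX ▸ ρ.invariants_comp_subtype_mem_invtSubmodule H
  exact ne_bot_of_le_ne_bot hH_ne (((le_invariants_comp_subtype_iff ρ).1 le_rfl).trans hHS)

lemma IsIrreducibleSubspace.fixingSubgroup_eq_bot_of_le_newPart {S : Submodule k V}
    (hS : ρ.IsIrreducibleSubspace S) (hSnew : S ≤ ρ.newPart) : ρ.fixingSubgroup S = ⊥ := by
  obtain ⟨W, ⟨hW, hW_faithful⟩, -, hSW⟩ := hS.exists_fixingSubgroup_le_of_le_sSup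
    hSnew fun _ hW => hW.1.mem_invtSubmodule
  exact le_bot_iff.1 (hW_faithful ▸ hSW hW)

variable (ρ)

lemma oldPart_sup_newPart : ρ.oldPart ⊔ ρ.newPart = ⊤ := by
  refine eq_top_of_forall_isIrreducibleSubspace_le
    (Sublattice.sup_mem ρ.oldPart_mem_invtSubmodule ρ.newPart_mem_invtSubmodule) fun S hS => ?_
  by_cases hfaithful : ρ.fixingSubgroup S = ⊥
  · exact le_sup_of_le_right (le_sSup ⟨hS, hfaithful⟩)
  · have := ρ.fixingSubgroup_normal hS.mem_invtSubmodule
    exact le_sup_of_le_left (((le_invariants_comp_subtype_iff ρ).2 le_rfl).trans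
      (ρ.invariants_comp_subtype_le_oldPart _ hfaithful))

lemma disjoint_oldPart_newPart : Disjoint ρ.oldPart ρ.newPart := by
  rw [disjoint_iff]
  by_contra hne
  obtain ⟨S, hSle, hS⟩ := exists_isIrreducibleSubspace_le
    (Sublattice.inf_mem ρ.oldPart_mem_invtSubmodule ρ.newPart_mem_invtSubmodule) hne
  exact hS.fixingSubgroup_ne_bot_of_le_oldPart (hSle.trans inf_le_left)
    (hS.fixingSubgroup_eq_bot_of_le_newPart (hSle.trans inf_le_right))

theorem isCompl_oldPart_newPart : IsCompl ρ.oldPart ρ.newPart :=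
  ⟨ρ.disjoint_oldPart_newPart, codisjoint_iff.2 ρ.oldPart_sup_newPart⟩

end Field

end Representation

open Representation in
theorem stmt_12_general {V : Type*} [AddCommGroup V] [Module ℚ V]
    {G : Type*} [Group G] [Finite G] (ρ : Representation ℚ G V)
    (N : Submodule ℚ V)
    (hN : N = Submodule.span ℚ
      (⋃ H ∈ {H : Subgroup G | H.Normal ∧ H ≠ ⊥}, {v : V | ∀ h ∈ H, ρ h v = v}))
    (Vnew : Submodule ℚ V)
    (hVnew : Vnew = sSup {W : Submodule ℚ V |
      (∀ g : G, ∀ x ∈ W, ρ g x ∈ W) ∧ W ≠ ⊥ ∧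
      (∀ U : Submodule ℚ V, U ≤ W → (∀ g : G, ∀ x ∈ U, ρ g x ∈ U) → U = ⊥ ∨ U = W) ∧
      (∀ g : G, g ≠ 1 → ∃ x ∈ W, ρ g x ≠ x)}) :
    N ⊓ Vnew = ⊥ ∧ N ⊔ Vnew = ⊤ ∧
    Nonempty ((V ⧸ N) ≃ₗ[ℚ] Vnew) := by
  have hN_old : N = ρ.oldPart := by
    simp_rw [hN, Submodule.span_iUnion₂, ← coe_invariants_comp_subtype, Submodule.span_eq,
      oldPart, sSup_image]
  have hVnew_new : Vnew = ρ.newPart := by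
    simp_rw [hVnew, newPart, isIrreducibleSubspace_iff, mem_invtSubmodule_iff_forall_mem,
      fixingSubgroup_eq_bot_iff, and_assoc]
  subst hN_old hVnew_new
  have h := ρ.isCompl_oldPart_newPart
  exact ⟨h.inf_eq_bot, h.sup_eq_top, ⟨Submodule.quotientEquivOfIsCompl _ _ h⟩⟩

/-- (Abstract form of Proposition 2.3.) Let `G` be a finite group (e.g. `Gal(K/F)`) and
`V` a finite-dimensional `ℚ`-representation of `G` (e.g. `E(K) ⊗ ℚ`). Let `V^new` be the
sum of the isotypic components of the faithful irreducible `ℚ`-representations of `G`,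
realized as the sum of all faithful simple `G`-submodules of `V`, and let `N` be the span
of the fixed subspaces `V^H` over all non-trivial normal subgroups `H ⊴ G` (these fixed
spaces are exactly the `E(L) ⊗ ℚ` for proper Galois subextensions `L/F`). Then the kernel
of the projection `V → V^new` equals `N`; i.e. `V = N ⊕ V^new`, so
`E(K/F)^{G-new} ⊗ ℚ = V/N ≅ V^new`. -/
theorem stmt_12 {V : Type*} [AddCommGroup V] [Module ℚ V] [FiniteDimensional ℚ V]
    {G : Type*} [Group G] [Finite G] (ρ : Representation ℚ G V)
    (N : Submodule ℚ V)
    (hN : N = Submodule.span ℚ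
      (⋃ H ∈ {H : Subgroup G | H.Normal ∧ H ≠ ⊥}, {v : V | ∀ h ∈ H, ρ h v = v}))
    (Vnew : Submodule ℚ V)
    (hVnew : Vnew = sSup {W : Submodule ℚ V |
      (∀ g : G, ∀ x ∈ W, ρ g x ∈ W) ∧ W ≠ ⊥ ∧
      (∀ U : Submodule ℚ V, U ≤ W → (∀ g : G, ∀ x ∈ U, ρ g x ∈ U) → U = ⊥ ∨ U = W) ∧
      (∀ g : G, g ≠ 1 → ∃ x ∈ W, ρ g x ≠ x)}) :
    N ⊓ Vnew = ⊥ ∧ N ⊔ Vnew = ⊤ ∧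
    Nonempty ((V ⧸ N) ≃ₗ[ℚ] Vnew) :=
  stmt_12_general ρ N hN Vnew hVnew
end

section
/- Let C be the smooth projective hyperelliptic curve y² = x⁶ + αx³ + 1 over a field of characteristic 0 (with α² ≠ 4 so C is smooth of genus 2). Then the maps f_±(x : y : z) = ((α ± 2)xz/(x ∓ z)², (α ± 2)y/(x ∓ z)³) define double covers from C to the elliptic curves E^± : y² = x³ + (3x + 2 ± α)², i.e. f_± are well-defined morphisms of degree 2 from C to E^±. -/
/-- Let `C : y² = x⁶ + αx³ + 1` be the smooth genus-2 hyperelliptic curve (in weighted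
projective coordinates `(x : y : z)`, with `y` of weight 3, the equation reads
`y² = x⁶ + αx³z³ + z⁶`), over a field of characteristic `0` with `α² ≠ 4`. Then the maps
`f_±(x : y : z) = ((α ± 2)xz/(x ∓ z)², (α ± 2)y/(x ∓ z)³)` define (double) covers from
`C` to the elliptic curves `E^± : y² = x³ + (3x + 2 ± α)²`: i.e., wherever defined
(`x ∓ z ≠ 0`), the image point satisfies the defining equation of `E^±`. -/
theorem stmt_19 {F : Type*} [Field F] [CharZero F] (α : F) (hα : α ^ 2 ≠ 4)
    (x y z : F) (hC : y ^ 2 = x ^ 6 + α * x ^ 3 * z ^ 3 + z ^ 6) :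
    (x - z ≠ 0 →
      ((α + 2) * y / (x - z) ^ 3) ^ 2 =
        ((α + 2) * x * z / (x - z) ^ 2) ^ 3 +
          (3 * ((α + 2) * x * z / (x - z) ^ 2) + 2 + α) ^ 2) ∧
    (x + z ≠ 0 →
      ((α - 2) * y / (x + z) ^ 3) ^ 2 =
        ((α - 2) * x * z / (x + z) ^ 2) ^ 3 +
          (3 * ((α - 2) * x * z / (x + z) ^ 2) + 2 - α) ^ 2) := by
  constructor
  · intro h
    have key : ((α + 2) * y) ^ 2 =
        ((α + 2) * x * z) ^ 3 +
          (3 * ((α + 2) * x * z) + (2 + α) * (x - z) ^ 2) ^ 2 * (x - z) ^ 2 := by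
      linear_combination (α + 2) ^ 2 * hC
    calc ((α + 2) * y / (x - z) ^ 3) ^ 2
        = (((α + 2) * x * z) ^ 3 +
            (3 * ((α + 2) * x * z) + (2 + α) * (x - z) ^ 2) ^ 2 * (x - z) ^ 2) /
            ((x - z) ^ 3) ^ 2 := by rw [div_pow, key]
      _ = ((α + 2) * x * z / (x - z) ^ 2) ^ 3 +
            (3 * ((α + 2) * x * z / (x - z) ^ 2) + 2 + α) ^ 2 := by
          field_simp
          ring
  · intro h
    have key : ((α - 2) * y) ^ 2 =
        ((α - 2) * x * z) ^ 3 +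
          (3 * ((α - 2) * x * z) + (2 - α) * (x + z) ^ 2) ^ 2 * (x + z) ^ 2 := by
      linear_combination (α - 2) ^ 2 * hC
    calc ((α - 2) * y / (x + z) ^ 3) ^ 2
        = (((α - 2) * x * z) ^ 3 +
            (3 * ((α - 2) * x * z) + (2 - α) * (x + z) ^ 2) ^ 2 * (x + z) ^ 2) /
            ((x + z) ^ 3) ^ 2 := by rw [div_pow, key]
      _ = ((α - 2) * x * z / (x + z) ^ 2) ^ 3 +
            (3 * ((α - 2) * x * z / (x + z) ^ 2) + 2 - α) ^ 2 := by
          field_simp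
          ring
end
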